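/- arXiv:1212.0991 — 2 statements merged into one kernel-verified Lean document; each statement's English description precedes it below -/
import Mathlib

section
/- In the Geiser specialization a₁ = a₂ = 0, the polynomials γ₄, r₁', r₃', r₁, r₂, r₃, φ₆, ψ₆, C₅, K satisfy the splittings: γ₄ = w·γ₁ with γ₁ = −(a₁'y₁ + a₂'y₂); r₁' = w²·(a₂'²B₁ − a₁'a₂'B₂ + a₁'²B₃); r₃' = w·(a₁'C₂ − a₂'C₁); r_i = w³·r̃_i for i = 1,2,3 where r̃₁ = −a₂'·r̃₁', r̃₂ = a₁'·r̃₁', r̃₃ = a₁'a₂'·r̃₃' with r̃₁' = a₂'²B₁ − a₁'a₂'B₂ + a₁'²B₃ and r̃₃' = a₁'C₂ − a₂'C₁; and φ₆ = w·φ₃, ψ₆ = w·ψ₃, C₅ = w·C̃, K = w·K̃ for some polynomials φ₃, ψ₃, C̃, K̃ (i.e., w divides φ₆, ψ₆, C₅, K). -/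
/-!
The splittings of `γ₄`, `r₁'`, `r₃'` and `rᵢ` are immediate, because `A₁ = -a₁'w` and
`A₂ = -a₂'w` are multiples of `w`. For `C₅`, the defining relations of the three quotients give
`y₁y₂C₅ = y₁A₂B₁ + y₂A₁B₃ + y₃A₁A₂`, a multiple of `w`; the cofactor is `y₁y₂C̃`, once
`a₂'y₃(w - b₁y₁²y₃) - B₃y₂` is seen to be divisible by `y₁y₂`. Cancelling `y₁y₂` gives `C₅ = wC̃`,
from which `φ₆ = wφ₃`, `ψ₆ = wψ₃` and `w ∣ K` follow.
-/

open MvPolynomial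

noncomputable section

/-- The polynomial ring ℚ[b₁,b₂,b₃,c₁,c₂,a₁',a₂',b₁',b₂',b₃',c₁',c₂',y₁,y₂,y₃]
(the Geiser specialization a₁ = a₂ = 0). -/
abbrev RG : Type := MvPolynomial (Fin 15) ℚ

def b1 : RG := X 0
def b2 : RG := X 1
def b3 : RG := X 2
def c1 : RG := X 3
def c2 : RG := X 4
def a1' : RG := X 5
def a2' : RG := X 6
def b1' : RG := X 7
def b2' : RG := X 8
def b3' : RG := X 9
def c1' : RG := X 10
def c2' : RG := X 11
def y1 : RG := X 12
def y2 : RG := X 13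
def y3 : RG := X 14

/-- w at y, with a₁ = a₂ = 0. -/
def w : RG := y3*(b1*y1^2 + b2*y1*y2 + b3*y2^2) + c1*y1^2*y2 + c2*y1*y2^2
/-- w' at y. -/
def w' : RG :=
  y3^2*(a1'*y1 + a2'*y2) + y3*(b1'*y1^2 + b2'*y1*y2 + b3'*y2^2) + c1'*y1^2*y2 + c2'*y1*y2^2

def A1 : RG := -(a1' * w)
def A2 : RG := -(a2' * w)
def B1 : RG := b1*w' - b1'*w
def B2 : RG := b2*w' - b2'*w
def B3 : RG := b3*w' - b3'*w
def C1 : RG := c1*w' - c1'*w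
def C2 : RG := c2*w' - c2'*w

def γ1 : RG := -(a1'*y1 + a2'*y2)
def rt1' : RG := a2'^2*B1 - a1'*a2'*B2 + a1'^2*B3
def rt3' : RG := a1'*C2 - a2'*C1
def rt1 : RG := -(a2' * rt1')
def rt2 : RG := a1' * rt1'
def rt3 : RG := a1'*a2'*rt3'

/-- C̃, in terms of the two exact quotients
qq₁ = (B₁ − a₁'b₁y₁y₃²)/y₂ and qq₂ = (a₂'y₃(w − b₁y₁²y₃) − B₃y₂)/(y₁y₂). -/
def Ct (qq1 qq2 : RG) : RG := -(a2' * qq1) + a1' * qq2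
def φ3 (qq1 qq2 : RG) : RG := -(a1' * C2) + y3 * Ct qq1 qq2
def ψ3 (qq1 qq2 : RG) : RG := -(a2' * C1) + y3 * Ct qq1 qq2

def γ4 : RG := y1*A1 + y2*A2
def r1'' : RG := B1*A2^2 - B2*A1*A2 + B3*A1^2
def r3'' : RG := A2*C1 - A1*C2
def r1 : RG := A2*r1''
def r2 : RG := -(A1*r1'')
def r3 : RG := A1*A2*r3''
def κ : RG := -(a1' * b1)
def C5 (q1 q2 q3 : RG) : RG := A2*q1 + q2*q3 + κ*B3*y1*y3
def φ6 (q1 q2 q3 : RG) : RG := A1*C2 + y3 * C5 q1 q2 q3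
def ψ6 (q1 q2 q3 : RG) : RG := A2*C1 + y3 * C5 q1 q2 q3
def K (q1 q2 q3 qK : RG) : RG := ψ6 q1 q2 q3 * qK - φ6 q1 q2 q3 * q3

theorem γ4_eq : γ4 = w * γ1 := by
  unfold γ4 γ1 A1 A2; ring

theorem r1''_eq : r1'' = w ^ 2 * rt1' := by
  unfold r1'' rt1' A1 A2; ring

theorem r3''_eq : r3'' = w * rt3' := by
  unfold r3'' rt3' A1 A2; ring

theorem r1_eq : r1 = w ^ 3 * rt1 := by
  unfold r1 rt1; rw [r1''_eq]; unfold A2; ring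

theorem r2_eq : r2 = w ^ 3 * rt2 := by
  unfold r2 rt2; rw [r1''_eq]; unfold A1; ring

theorem r3_eq : r3 = w ^ 3 * rt3 := by
  unfold r3 rt3; rw [r3''_eq]; unfold A1 A2; ring

def qq2 : RG :=
  (a2'*b2 - a1'*b3)*y3^2 + (a2'*c1 - b1'*b3 + b1*b3')*y1*y3 + (a2'*c2 - b2'*b3 + b2*b3')*y2*y3
    + (b3'*c1 - b3*c1')*y1*y2 + (b3'*c2 - b3*c2')*y2^2

theorem y1_mul_y2_mul_qq2 : y1 * y2 * qq2 = a2' * y3 * (w - b1 * y1 ^ 2 * y3) - B3 * y2 := by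
  unfold qq2 B3 w w'; ring

section Quotients

variable {q1 q2 q3 : RG}

theorem y1_mul_y2_mul_C5 (h1 : y2 * q1 = B1 + κ*y1*y3^2) (h2 : y2 * q2 = A1 - κ*y1^2*y3)
    (h3 : y1 * q3 = A2*y3 + B3*y2) :
    y1 * y2 * C5 q1 q2 q3 = y1 * A2 * B1 + y2 * A1 * B3 + y3 * A1 * A2 := by
  unfold C5
  linear_combination y1 * A2 * h1 + y1 * q3 * h2 + (A1 - κ*y1^2*y3) * h3

theorem y1_mul_y2_mul_Ct (h1 : y2 * q1 = B1 + κ*y1*y3^2) :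
    y1 * y2 * Ct q1 qq2 = -(a2' * y1 * B1) - a1' * y2 * B3 + a1' * a2' * y3 * w := by
  unfold Ct
  unfold κ at h1
  linear_combination -(a2' * y1) * h1 + a1' * y1_mul_y2_mul_qq2

theorem C5_eq (h1 : y2 * q1 = B1 + κ*y1*y3^2) (h2 : y2 * q2 = A1 - κ*y1^2*y3)
    (h3 : y1 * q3 = A2*y3 + B3*y2) :
    C5 q1 q2 q3 = w * Ct q1 qq2 := by
  apply mul_left_cancel₀ (mul_ne_zero (X_ne_zero 12) (X_ne_zero 13) : y1 * y2 ≠ 0)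
  rw [y1_mul_y2_mul_C5 h1 h2 h3, mul_left_comm, y1_mul_y2_mul_Ct h1]
  unfold A1 A2
  ring

theorem φ6_eq (hC5 : C5 q1 q2 q3 = w * Ct q1 qq2) : φ6 q1 q2 q3 = w * φ3 q1 qq2 := by
  unfold φ6 φ3; rw [hC5]; unfold A1; ring

theorem ψ6_eq (hC5 : C5 q1 q2 q3 = w * Ct q1 qq2) : ψ6 q1 q2 q3 = w * ψ3 q1 qq2 := by
  unfold ψ6 ψ3; rw [hC5]; unfold A2; ring

end Quotients

theorem stmt10_general (q1 q2 q3 qK : RG)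
    (h1 : y2 * q1 = B1 + κ*y1*y3^2)
    (h2 : y2 * q2 = A1 - κ*y1^2*y3)
    (h3 : y1 * q3 = A2*y3 + B3*y2) :
    γ4 = w * γ1 ∧
    r1'' = w^2 * rt1' ∧
    r3'' = w * rt3' ∧
    r1 = w^3 * rt1 ∧ r2 = w^3 * rt2 ∧ r3 = w^3 * rt3 ∧
    w ∣ φ6 q1 q2 q3 ∧ w ∣ ψ6 q1 q2 q3 ∧ w ∣ C5 q1 q2 q3 ∧ w ∣ K q1 q2 q3 qK := by
  have hC5 := C5_eq h1 h2 h3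
  have hφ6 : w ∣ φ6 q1 q2 q3 := ⟨_, φ6_eq hC5⟩
  have hψ6 : w ∣ ψ6 q1 q2 q3 := ⟨_, ψ6_eq hC5⟩
  refine ⟨γ4_eq, r1''_eq, r3''_eq, r1_eq, r2_eq, r3_eq, hφ6, hψ6, ⟨_, hC5⟩, ?_⟩
  exact dvd_sub (hψ6.mul_right qK) (hφ6.mul_right q3)

/-- In the Geiser specialization a₁ = a₂ = 0 the splittings
γ₄ = wγ₁, r₁' = w²r̃₁', r₃' = wr̃₃', rᵢ = w³r̃ᵢ hold, and w divides
φ₆, ψ₆, C₅ and K. -/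
theorem stmt10 (q1 q2 q3 qK : RG)
    (h1 : y2 * q1 = B1 + κ*y1*y3^2)
    (h2 : y2 * q2 = A1 - κ*y1^2*y3)
    (h3 : y1 * q3 = A2*y3 + B3*y2)
    (hqK : y2 * qK = A1*y3 + B1*y1) :
    γ4 = w * γ1 ∧
    r1'' = w^2 * rt1' ∧
    r3'' = w * rt3' ∧
    r1 = w^3 * rt1 ∧ r2 = w^3 * rt2 ∧ r3 = w^3 * rt3 ∧
    w ∣ φ6 q1 q2 q3 ∧ w ∣ ψ6 q1 q2 q3 ∧ w ∣ C5 q1 q2 q3 ∧ w ∣ K q1 q2 q3 qK :=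
  stmt10_general q1 q2 q3 qK h1 h2 h3
end
end

section
/- In the Geiser specialization a₁ = a₂ = 0, with z₁ = φ₃·((a₂'²wφ₃ + B₃r̃₁')/y₁), z₂ = ψ₃·((a₁'²wψ₃ + B₁r̃₁')/y₂), z₃ = ψ₃φ₃C̃ (the indicated divisions being exact), the identities y₃z₁ − y₁z₃ = a₂'·φ₃·K̃ and y₂z₃ − y₃z₂ = a₁'·ψ₃·K̃ hold. -/
open MvPolynomial

noncomputable section

/-! Both sides of the first identity carry the factor φ₃, and both sides of the second the factor
ψ₃; what remains is a cofactor identity. Multiplying it by (y₁y₂)² replaces every exact quotient by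
its numerator, giving a polynomial identity checked by `ring`, and since the polynomial ring is a
domain the factor (y₁y₂)² cancels again. -/

lemma eq_of_cleared_denominators {R : Type*} [CommRing R] [IsDomain R]
    {y y' y3 a D φ ψ ct u k k' P Q Cc U K K' : R} (hD : y * y' = D) (hD0 : D ≠ 0)
    (hP : D * φ = P) (hQ : D * ψ = Q) (hC : D * ct = Cc) (hU : D * (y * u) = U)
    (hK : y' * k = K) (hK' : y * k' = K')
    (hI : y' * y3 * U - y * Q * Cc = a * y * Q * K - a * y' * P * K') :
    y3 * u - y * ψ * ct = a * (ψ * k - φ * k') := by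
  subst hP hQ hC hU hK hK' hD
  refine mul_left_cancel₀ (pow_ne_zero 2 hD0) ?_
  linear_combination hI

lemma y1_mul_y2_ne_zero : y1 * y2 ≠ 0 :=
  mul_ne_zero (X_ne_zero _) (X_ne_zero _)

def CtNum : RG :=
  -(a2' * y1 * (B1 - a1' * b1 * y1 * y3 ^ 2)) + a1' * (a2' * y3 * (w - b1 * y1 ^ 2 * y3) - B3 * y2)
def φ3Num : RG := -(a1' * C2) * y1 * y2 + y3 * CtNum
def ψ3Num : RG := -(a2' * C1) * y1 * y2 + y3 * CtNum

section Quotients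

variable {qq1 qq2 : RG} (h1 : y2 * qq1 = B1 - a1' * b1 * y1 * y3 ^ 2)
  (h2 : y1 * y2 * qq2 = a2' * y3 * (w - b1 * y1 ^ 2 * y3) - B3 * y2)
include h1 h2

lemma y1_mul_y2_mul_Ct_s15 : y1 * y2 * Ct qq1 qq2 = CtNum := by
  unfold Ct CtNum
  linear_combination (-(a2' * y1)) * h1 + a1' * h2

lemma y1_mul_y2_mul_φ3 : y1 * y2 * φ3 qq1 qq2 = φ3Num := by
  unfold φ3 φ3Num
  linear_combination y3 * y1_mul_y2_mul_Ct_s15 h1 h2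

lemma y1_mul_y2_mul_ψ3 : y1 * y2 * ψ3 qq1 qq2 = ψ3Num := by
  unfold ψ3 ψ3Num
  linear_combination y3 * y1_mul_y2_mul_Ct_s15 h1 h2

end Quotients

lemma numerator_identity₁ :
    y2 * y3 * (a2' ^ 2 * w * φ3Num + y1 * y2 * (B3 * rt1')) - y1 * ψ3Num * CtNum
      = a2' * y1 * ψ3Num * (-(a1' * w * y3) + B1 * y1)
        - a2' * y2 * φ3Num * (-(a2' * w * y3) + B3 * y2) := by
  simp only [φ3Num, ψ3Num, CtNum, rt1', B1, B2, B3, C1, C2, w, w']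
  ring

lemma numerator_identity₂ :
    y1 * y3 * (a1' ^ 2 * w * ψ3Num + y1 * y2 * (B1 * rt1')) - y2 * φ3Num * CtNum
      = a1' * y2 * φ3Num * (-(a2' * w * y3) + B3 * y2)
        - a1' * y1 * ψ3Num * (-(a1' * w * y3) + B1 * y1) := by
  simp only [φ3Num, ψ3Num, CtNum, rt1', B1, B2, B3, C1, C2, w, w']
  ring

/-- With z the Geiser involution and K̃ the fixed-point polynomial,
y₃z₁ − y₁z₃ = a₂'φ₃K̃ and y₂z₃ − y₃z₂ = a₁'ψ₃K̃. -/
theorem stmt15 (qq1 qq2 u1 u2 qk1 qk2 z1 z2 z3 Kt : RG)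
    (h1 : y2 * qq1 = B1 - a1'*b1*y1*y3^2)
    (h2 : y1 * y2 * qq2 = a2'*y3*(w - b1*y1^2*y3) - B3*y2)
    (hu1 : y1 * u1 = a2'^2*w*φ3 qq1 qq2 + B3*rt1')
    (hu2 : y2 * u2 = a1'^2*w*ψ3 qq1 qq2 + B1*rt1')
    (hk1 : y2 * qk1 = -(a1'*w*y3) + B1*y1)
    (hk2 : y1 * qk2 = -(a2'*w*y3) + B3*y2)
    (hz1 : z1 = φ3 qq1 qq2 * u1)
    (hz2 : z2 = ψ3 qq1 qq2 * u2)
    (hz3 : z3 = ψ3 qq1 qq2 * φ3 qq1 qq2 * Ct qq1 qq2)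
    (hK : Kt = ψ3 qq1 qq2 * qk1 - φ3 qq1 qq2 * qk2) :
    y3*z1 - y1*z3 = a2' * φ3 qq1 qq2 * Kt ∧
    y2*z3 - y3*z2 = a1' * ψ3 qq1 qq2 * Kt := by
  have hC := y1_mul_y2_mul_Ct_s15 h1 h2
  have hφ := y1_mul_y2_mul_φ3 h1 h2
  have hψ := y1_mul_y2_mul_ψ3 h1 h2
  have cofactor₁ : y3 * u1 - y1 * ψ3 qq1 qq2 * Ct qq1 qq2
      = a2' * (ψ3 qq1 qq2 * qk1 - φ3 qq1 qq2 * qk2) :=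
    eq_of_cleared_denominators rfl y1_mul_y2_ne_zero hφ hψ hC
      (by linear_combination y1 * y2 * hu1 + a2' ^ 2 * w * hφ) hk1 hk2 numerator_identity₁
  have cofactor₂ : y3 * u2 - y2 * φ3 qq1 qq2 * Ct qq1 qq2
      = a1' * (φ3 qq1 qq2 * qk2 - ψ3 qq1 qq2 * qk1) :=
    eq_of_cleared_denominators (mul_comm y2 y1) y1_mul_y2_ne_zero hψ hφ hC
      (by linear_combination y1 * y2 * hu2 + a1' ^ 2 * w * hψ) hk2 hk1 numerator_identity₂
  subst hz1 hz2 hz3 hK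
  constructor
  · linear_combination φ3 qq1 qq2 * cofactor₁
  · linear_combination -(ψ3 qq1 qq2 * cofactor₂)
end
end
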